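/- Let A ∈ ℝ^{d×d} be positive definite, let M_n ∈ ℝ^{d×d'}, β > 0, and let B = {M ∈ ℝ^{d×d'} : ‖A^{1/2}(M − M_n)‖_F ≤ √β}. Let Ψ ∈ ℝ^{S×d'} (S a finite index set) satisfy ‖Ψᵀ v‖₂ ≤ C_ψ ‖v‖_∞ for all v ∈ ℝ^S, where C_ψ > 0. Let v ∈ ℝ^S with ‖v‖_∞ ≤ H for some H > 0, let φ ∈ ℝ^d, and let M̃, M* ∈ B. Then φᵀ (M̃ − M*) Ψᵀ v ≤ 2 C_ψ H √(β · φᵀ A^{-1} φ). -/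

import Mathlib

open Matrix Finset

/-- The Frobenius norm of a matrix. -/
noncomputable def frobNorm {d d' : ℕ} (Y : Matrix (Fin d) (Fin d') ℝ) : ℝ :=
  Real.sqrt (∑ i, ∑ j, (Y i j) ^ 2)

/-- The square root of a positive semidefinite matrix, as `Matrix.PosSemidef.sqrt` was defined
in the older Mathlib (removed since). -/
noncomputable def Matrix.PosSemidef.sqrt {n : Type*} [Fintype n] [DecidableEq n]
    {A : Matrix n n ℝ} (hA : A.PosSemidef) : Matrix n n ℝ :=
  hA.1.eigenvectorUnitary.1 * diagonal ((↑) ∘ (√·) ∘ hA.1.eigenvalues) *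
    (star hA.1.eigenvectorUnitary : Matrix n n ℝ)

/-!
Write `R = A^{1/2}`, `u = R⁻¹ φ` and `w = Ψᵀ v`. Since `R` is symmetric,
`φᵀ (M̃ − M*) w = uᵀ (R (M̃ − M*)) w` and `φᵀ A⁻¹ φ = ‖u‖₂²`. Cauchy–Schwarz, together with
`‖N w‖₂ ≤ ‖N‖_F ‖w‖₂`, bounds the left side by `‖u‖₂ ‖R (M̃ − M*)‖_F ‖w‖₂`; the triangle
inequality through `M_n` gives `‖R (M̃ − M*)‖_F ≤ 2 √β`, and `‖w‖₂ ≤ C_ψ H` by assumption.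
-/

namespace Matrix.PosSemidef

variable {n : Type*} [Fintype n] [DecidableEq n] {A : Matrix n n ℝ}

theorem sqrt_mul_self (hA : A.PosSemidef) : hA.sqrt * hA.sqrt = A := by
  set U : Matrix n n ℝ := hA.1.eigenvectorUnitary.1
  set D : Matrix n n ℝ := diagonal ((↑) ∘ (√·) ∘ hA.1.eigenvalues)
  have hU : star U * U = 1 := Unitary.coe_star_mul_self _
  have hD : D * D = diagonal (RCLike.ofReal ∘ hA.1.eigenvalues) := by
    rw [diagonal_mul_diagonal]
    congr 1
    funext i
    simp [Real.mul_self_sqrt (hA.eigenvalues_nonneg i)]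
  conv_rhs => rw [hA.1.spectral_theorem, Unitary.conjStarAlgAut_apply]
  calc U * D * star U * (U * D * star U) = U * D * (star U * U) * D * star U := by
        simp only [Matrix.mul_assoc]
    _ = _ := by rw [hU, Matrix.mul_one, Matrix.mul_assoc U D D, hD]

theorem transpose_sqrt (hA : A.PosSemidef) : hA.sqrtᵀ = hA.sqrt := by
  rw [← conjTranspose_eq_transpose_of_trivial, PosSemidef.sqrt, conjTranspose_mul,
    conjTranspose_mul, diagonal_conjTranspose, ← star_eq_conjTranspose,
    ← star_eq_conjTranspose, star_star]
  simp [Matrix.mul_assoc]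

end Matrix.PosSemidef

theorem Matrix.PosDef.isUnit_det_sqrt {n : Type*} [Fintype n] [DecidableEq n]
    {A : Matrix n n ℝ} (hA : A.PosDef) : IsUnit hA.posSemidef.sqrt.det := by
  have hdet : hA.posSemidef.sqrt.det * hA.posSemidef.sqrt.det = A.det := by
    rw [← det_mul, hA.posSemidef.sqrt_mul_self]
  exact isUnit_iff_ne_zero.2 fun h0 => hA.det_pos.ne' (by rw [← hdet, h0, mul_zero])

section Symmetric

variable {n m : Type*} [Fintype n] [Fintype m] [DecidableEq n] {R : Matrix n n ℝ}

theorem dotProduct_mulVec_eq_inv_mulVec_dotProduct (hR : Rᵀ = R) (hdet : IsUnit R.det)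
    (φ : n → ℝ) (M : Matrix n m ℝ) (x : m → ℝ) :
    φ ⬝ᵥ (M *ᵥ x) = (R⁻¹ *ᵥ φ) ⬝ᵥ ((R * M) *ᵥ x) := by
  rw [← mulVec_mulVec, dotProduct_mulVec (R⁻¹ *ᵥ φ), ← mulVec_transpose, hR, mulVec_mulVec,
    mul_nonsing_inv R hdet, one_mulVec]

theorem dotProduct_inv_mul_self_mulVec (hR : Rᵀ = R) (φ : n → ℝ) :
    φ ⬝ᵥ ((R * R)⁻¹ *ᵥ φ) = ∑ i, (R⁻¹ *ᵥ φ) i ^ 2 := by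
  rw [Matrix.mul_inv_rev, ← mulVec_mulVec, dotProduct_mulVec, ← vecMul_transpose,
    transpose_nonsing_inv, hR, dotProduct]
  simp only [sq]

end Symmetric

section Frobenius

variable {d d' : ℕ}

theorem frobNorm_sub_le (X Y : Matrix (Fin d) (Fin d') ℝ) :
    frobNorm (X - Y) ≤ frobNorm X + frobNorm Y := by
  have h := norm_sub_le (WithLp.toLp 2 fun p : Fin d × Fin d' => X p.1 p.2)
    (WithLp.toLp 2 fun p : Fin d × Fin d' => Y p.1 p.2)
  simpa [frobNorm, EuclideanSpace.norm_eq, sq_abs, Fintype.sum_prod_type] using h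

theorem sqrt_sum_sq_mulVec_le (N : Matrix (Fin d) (Fin d') ℝ) (w : Fin d' → ℝ) :
    √(∑ i, (N *ᵥ w) i ^ 2) ≤ frobNorm N * √(∑ j, w j ^ 2) := by
  rw [frobNorm, ← Real.sqrt_mul (by positivity), Finset.sum_mul]
  refine Real.sqrt_le_sqrt (Finset.sum_le_sum fun i _ => ?_)
  simpa [mulVec, dotProduct] using Finset.sum_mul_sq_le_sq_mul_sq univ (N i) w

theorem dotProduct_mulVec_le (u : Fin d → ℝ) (N : Matrix (Fin d) (Fin d') ℝ)
    (w : Fin d' → ℝ) :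
    u ⬝ᵥ (N *ᵥ w) ≤ √(∑ i, u i ^ 2) * frobNorm N * √(∑ j, w j ^ 2) := by
  calc u ⬝ᵥ (N *ᵥ w) ≤ √(∑ i, u i ^ 2) * √(∑ i, (N *ᵥ w) i ^ 2) :=
        Real.sum_mul_le_sqrt_mul_sqrt _ _ _
    _ ≤ √(∑ i, u i ^ 2) * (frobNorm N * √(∑ j, w j ^ 2)) := by
        gcongr
        exact sqrt_sum_sq_mulVec_le N w
    _ = _ := (mul_assoc _ _ _).symm

end Frobenius

theorem per_step_error_bound_frobenius_general {d d' : ℕ} {S : Type*} [Fintype S]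
    (A : Matrix (Fin d) (Fin d) ℝ) (hA : A.PosDef)
    (Mn : Matrix (Fin d) (Fin d') ℝ) (β Cψ H : ℝ)
    (hCψ : 0 < Cψ)
    (Ψ : Matrix S (Fin d') ℝ)
    (hΨ : ∀ v : S → ℝ, Real.sqrt (∑ j, ((Ψᵀ *ᵥ v) j) ^ 2) ≤ Cψ * ‖v‖)
    (v : S → ℝ) (hv : ‖v‖ ≤ H) (φ : Fin d → ℝ)
    (Mt Mstar : Matrix (Fin d) (Fin d') ℝ)
    (hMt : frobNorm (hA.posSemidef.sqrt * (Mt - Mn)) ≤ Real.sqrt β)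
    (hMstar : frobNorm (hA.posSemidef.sqrt * (Mstar - Mn)) ≤ Real.sqrt β) :
    φ ⬝ᵥ ((Mt - Mstar) *ᵥ (Ψᵀ *ᵥ v)) ≤
      2 * Cψ * H * Real.sqrt (β * (φ ⬝ᵥ (A⁻¹ *ᵥ φ))) := by
  set R := hA.posSemidef.sqrt
  have hR : Rᵀ = R := hA.posSemidef.transpose_sqrt
  have hdiff : frobNorm (R * (Mt - Mstar)) ≤ 2 * √β := by
    calc frobNorm (R * (Mt - Mstar)) = frobNorm (R * (Mt - Mn) - R * (Mstar - Mn)) := by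
          rw [← Matrix.mul_sub, sub_sub_sub_cancel_right]
      _ ≤ √β + √β := (frobNorm_sub_le _ _).trans (add_le_add hMt hMstar)
      _ = 2 * √β := by ring
  have hw : √(∑ j, (Ψᵀ *ᵥ v) j ^ 2) ≤ Cψ * H :=
    (hΨ v).trans (mul_le_mul_of_nonneg_left hv hCψ.le)
  calc φ ⬝ᵥ ((Mt - Mstar) *ᵥ (Ψᵀ *ᵥ v))
      = (R⁻¹ *ᵥ φ) ⬝ᵥ ((R * (Mt - Mstar)) *ᵥ (Ψᵀ *ᵥ v)) :=
        dotProduct_mulVec_eq_inv_mulVec_dotProduct hR hA.isUnit_det_sqrt _ _ _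
    _ ≤ √(∑ i, (R⁻¹ *ᵥ φ) i ^ 2) * frobNorm (R * (Mt - Mstar)) * √(∑ j, (Ψᵀ *ᵥ v) j ^ 2) :=
        dotProduct_mulVec_le _ _ _
    _ ≤ √(∑ i, (R⁻¹ *ᵥ φ) i ^ 2) * (2 * √β) * (Cψ * H) := by gcongr
    _ = 2 * Cψ * H * √(β * (φ ⬝ᵥ (A⁻¹ *ᵥ φ))) := by
        rw [← hA.posSemidef.sqrt_mul_self, dotProduct_inv_mul_self_mulVec hR,
          Real.sqrt_mul' β (by positivity)]
        ring

/-- Per-step error bound under the stronger feature regularity Assumption 2′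
(Frobenius-norm confidence ball): for `M̃, M*` in the ball,
`φᵀ(M̃ − M*)Ψᵀv ≤ 2 Cψ H √(β · φᵀ A⁻¹ φ)`.  The norm on `S → ℝ` is the sup
norm (Pi norm), and `‖Ψᵀv‖₂` is written explicitly as a Euclidean norm. -/
theorem per_step_error_bound_frobenius {d d' : ℕ} {S : Type*} [Fintype S]
    (A : Matrix (Fin d) (Fin d) ℝ) (hA : A.PosDef)
    (Mn : Matrix (Fin d) (Fin d') ℝ) (β Cψ H : ℝ) (hβ : 0 < β)
    (hCψ : 0 < Cψ) (hH : 0 < H)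
    (Ψ : Matrix S (Fin d') ℝ)
    (hΨ : ∀ v : S → ℝ, Real.sqrt (∑ j, ((Ψᵀ *ᵥ v) j) ^ 2) ≤ Cψ * ‖v‖)
    (v : S → ℝ) (hv : ‖v‖ ≤ H) (φ : Fin d → ℝ)
    (Mt Mstar : Matrix (Fin d) (Fin d') ℝ)
    (hMt : frobNorm (hA.posSemidef.sqrt * (Mt - Mn)) ≤ Real.sqrt β)
    (hMstar : frobNorm (hA.posSemidef.sqrt * (Mstar - Mn)) ≤ Real.sqrt β) :
    φ ⬝ᵥ ((Mt - Mstar) *ᵥ (Ψᵀ *ᵥ v)) ≤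
      2 * Cψ * H * Real.sqrt (β * (φ ⬝ᵥ (A⁻¹ *ᵥ φ))) :=
  per_step_error_bound_frobenius_general A hA Mn β Cψ H hCψ Ψ hΨ v hv φ Mt Mstar hMt hMstar
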